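/- Let p ∈ (1,∞), let μ be a locally finite Borel measure on ℝ^d, and let {a_Q} be a finitely supported family of non-negative reals indexed by dyadic cubes. Then ∫ (∑_Q a_Q 1_Q)^p dμ ≍_p ∑_Q a_Q μ(Q) ( (1/μ(Q)) ∑_{R ⊆ Q} a_R μ(R) )^{p-1}, where terms with μ(Q) = 0 are interpreted as 0. -/

import Mathlib

open MeasureTheory ENNReal Filter
open scoped NNReal ENNReal

/-- A dyadic cube `2^k([0,1)^d + j)` in `ℝ^d`. -/
structure DyadicCube (d : ℕ) where
  k : ℤ
  j : Fin d → ℤ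

/-- The underlying set of a dyadic cube. -/
def DyadicCube.toSet {d : ℕ} (Q : DyadicCube d) : Set (Fin d → ℝ) :=
  {x | ∀ i, (2:ℝ) ^ Q.k * (Q.j i) ≤ x i ∧ x i < (2:ℝ) ^ Q.k * (Q.j i + 1)}

/-!
Write `f = ∑ a_Q 1_Q`, `S_Q = ∑_{R ⊆ Q} a_R μ(R)` and `E` for the right-hand side.
The cubes through a point form a chain ordered by scale, and for a chain the elementary
inequality `t^q - s^q ≤ q (t - s) t^(q-1)` telescopes to
`(∑ a_i)^q ≤ q ∑ a_i (∑_{j ≤ i} a_j)^(q-1)`.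

Upper bound. Ordering from small to large cubes gives `f^p ≤ p ∑_Q a_Q 1_Q f_Q^(p-1)` with
`f_Q = ∑_{R ⊆ Q} a_R 1_R`; for `p ≤ 2` Jensen's inequality for the concave power `p - 1`
bounds `∫_Q f_Q^(p-1)` by `μ(Q) (S_Q / μ(Q))^(p-1)`. For `p > 2` order from large to small:
with `t_Q = ∑_{R ⊇ Q} a_R`, `∫ f^p ≤ p D` where `D = ∑ a_Q μ(Q) t_Q^(p-1)`; the chain
inequality for `t_Q^(p-1)`, an exchange of sums and Hölder's inequality with weights
`a_Q μ(Q)` give `D ≤ (p-1) E^(1/(p-1)) D^(1 - 1/(p-1))`, hence `D ≤ (p-1)^(p-1) E`.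

Lower bound. `S_Q / μ(Q)` is at most the average of `f` on `Q`, hence at most the dyadic
maximal function `Mf` on `Q`, so `E ≤ ∫ f (Mf)^(p-1)`. Splitting a level set of `Mf` into
maximal cubes gives `t μ(Mf ≥ t) ≤ ∫_{Mf ≥ t} f`; the layer-cake formula turns this into
`∫ (Mf)^p ≤ p' ∫ f (Mf)^(p-1)`, and Hölder's inequality closes the argument with
`∫ f (Mf)^(p-1) ≤ p'^(p-1) ∫ f^p`.
-/

theorem Real.rpow_sub_rpow_le_mul_sub_mul_rpow {s t q : ℝ} (hq : 1 ≤ q) (hs : 0 ≤ s)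
    (hst : s ≤ t) : t ^ q - s ^ q ≤ q * ((t - s) * t ^ (q - 1)) := by
  obtain rfl | ht := (hs.trans hst).eq_or_lt
  · obtain rfl : s = 0 := le_antisymm hst hs
    simp
  -- Bernoulli's inequality at `s / t - 1`, rescaled by `t ^ q`
  have hu : 1 + q * (s / t - 1) ≤ (s / t) ^ q := by
    simpa using one_add_mul_self_le_rpow_one_add (s := s / t - 1)
      (by linarith [div_nonneg hs ht.le]) hq
  have htq : t ^ q = t * t ^ (q - 1) := by
    rw [← Real.rpow_one_add' ht.le (by linarith)]; ring_nf
  rw [Real.div_rpow hs ht.le, le_div_iff₀ (by positivity)] at hu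
  have hrescale : (s / t - 1) * t ^ q = (s - t) * t ^ (q - 1) := by
    rw [htq]; field_simp
  nlinarith

theorem ENNReal.rpow_le_rpow_add_mul_sub_mul_rpow {s t : ℝ≥0∞} {q : ℝ} (hq : 1 ≤ q)
    (hst : s ≤ t) (ht : t ≠ ∞) :
    t ^ q ≤ s ^ q + ENNReal.ofReal q * ((t - s) * t ^ (q - 1)) := by
  have hs : s ≠ ∞ := ne_top_of_le_ne_top ht hst
  have hst' : s.toReal ≤ t.toReal := (toReal_le_toReal hs ht).2 hst
  have hreal := Real.rpow_sub_rpow_le_mul_sub_mul_rpow hq toReal_nonneg hst'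
  have hprod : 0 ≤ q * ((t.toReal - s.toReal) * t.toReal ^ (q - 1)) :=
    mul_nonneg (by linarith) (mul_nonneg (by linarith) (by positivity))
  rw [← ofReal_toReal ht, ← ofReal_toReal hs, ← ofReal_sub _ toReal_nonneg,
    ofReal_rpow_of_nonneg toReal_nonneg (by linarith),
    ofReal_rpow_of_nonneg toReal_nonneg (by linarith),
    ofReal_rpow_of_nonneg toReal_nonneg (by linarith), ← ofReal_mul (by linarith),
    ← ofReal_mul (by linarith), ← ofReal_add (by positivity) hprod]
  exact ofReal_le_ofReal (by linarith)

theorem ENNReal.rpow_sum_le_ofReal_mul_sum_mul_rpow_sum_filter_le {ι β : Type*} [LinearOrder β]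
    (e : ι → β) {q : ℝ} (hq : 1 ≤ q) (a : ι → ℝ≥0∞) (s : Finset ι) (ha : ∀ i ∈ s, a i ≠ ∞) :
    (∑ i ∈ s, a i) ^ q ≤
      ENNReal.ofReal q * ∑ i ∈ s, a i * (∑ j ∈ s with e j ≤ e i, a j) ^ (q - 1) := by
  classical
  induction s using Finset.induction_on_max_value e with
  | empty => simp [zero_rpow_of_pos (by linarith : 0 < q)]
  | insert i s hi hmax ih =>
    have hs : ∑ j ∈ s, a j ≠ ∞ := sum_ne_top.2 fun j hj => ha j (Finset.mem_insert_of_mem hj)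
    have hfilter_i : {j ∈ insert i s | e j ≤ e i} = insert i s :=
      Finset.filter_true_of_mem fun j hj => (Finset.mem_insert.1 hj).elim (· ▸ le_rfl) (hmax j)
    have hstep := rpow_le_rpow_add_mul_sub_mul_rpow hq (le_add_self : ∑ j ∈ s, a j ≤ _)
      (add_ne_top.2 ⟨ha i (Finset.mem_insert_self i s), hs⟩)
    rw [ENNReal.add_sub_cancel_right hs] at hstep
    rw [Finset.sum_insert hi, Finset.sum_insert hi, hfilter_i, Finset.sum_insert hi]
    calc (a i + ∑ j ∈ s, a j) ^ q
        ≤ (∑ j ∈ s, a j) ^ q + ENNReal.ofReal q * (a i * (a i + ∑ j ∈ s, a j) ^ (q - 1)) :=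
          hstep
      _ ≤ ENNReal.ofReal q * ∑ j ∈ s, a j * (∑ k ∈ s with e k ≤ e j, a k) ^ (q - 1)
            + ENNReal.ofReal q * (a i * (a i + ∑ j ∈ s, a j) ^ (q - 1)) := by
          gcongr
          exact ih fun j hj => ha j (Finset.mem_insert_of_mem hj)
      _ ≤ ENNReal.ofReal q * ∑ j ∈ s, a j * (∑ k ∈ insert i s with e k ≤ e j, a k) ^ (q - 1)
            + ENNReal.ofReal q * (a i * (a i + ∑ j ∈ s, a j) ^ (q - 1)) := by
          gcongr _ * ∑ j ∈ s, _ * ?_ ^ _ + _ with j hj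
          exact Finset.sum_le_sum_of_subset
            (Finset.filter_subset_filter _ (Finset.subset_insert i s))
      _ = _ := by rw [mul_add, add_comm]

theorem ENNReal.le_rpow_of_le_mul_rpow_one_sub_inv {x a : ℝ≥0∞} {q : ℝ} (hq : 0 < q)
    (hx : x ≠ ∞) (h : x ≤ a * x ^ (1 - q⁻¹)) : x ≤ a ^ q := by
  obtain rfl | hx0 := eq_or_ne x 0
  · exact zero_le
  have hsplit : x ^ q⁻¹ * x ^ (1 - q⁻¹) = x := by
    rw [← rpow_add _ _ hx0 hx, add_sub_cancel, rpow_one]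
  have hroot : x ^ q⁻¹ ≤ a :=
    (ENNReal.mul_le_mul_iff_left (rpow_pos (pos_iff_ne_zero.2 hx0) hx).ne'
      (rpow_ne_top_of_nonneg' (pos_iff_ne_zero.2 hx0) hx)).1 (hsplit.trans_le h)
  calc x = (x ^ q⁻¹) ^ q := by rw [← rpow_mul, inv_mul_cancel₀ hq.ne', rpow_one]
    _ ≤ a ^ q := rpow_le_rpow hroot hq.le

theorem ENNReal.inner_le_weight_mul_Lp_mul_Lq {ι : Type*} (s : Finset ι) (w f g : ι → ℝ≥0∞)
    {p q : ℝ} (hpq : p.HolderConjugate q) :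
    ∑ i ∈ s, w i * f i * g i ≤
      (∑ i ∈ s, w i * f i ^ p) ^ (1 / p) * (∑ i ∈ s, w i * g i ^ q) ^ (1 / q) := by
  have hpow : ∀ (r : ℝ), 0 < r → ∀ (v y : ℝ≥0∞), (v ^ (1 / r) * y) ^ r = v * y ^ r :=
    fun r hr v y => by
      rw [mul_rpow_of_nonneg _ _ hr.le, ← rpow_mul, one_div_mul_cancel hr.ne', rpow_one]
  have hweight : ∀ i, w i * f i * g i = (w i ^ (1 / p) * f i) * (w i ^ (1 / q) * g i) :=
    fun i => by
      rw [mul_mul_mul_comm, ← rpow_add_of_nonneg _ _ (by simp [hpq.nonneg])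
        (by simp [hpq.symm.nonneg]), hpq.one_div_add_one_div, div_one, rpow_one, mul_assoc]
  simp_rw [hweight, ← hpow p hpq.pos, ← hpow q hpq.symm.pos]
  exact inner_le_Lp_mul_Lq s _ _ hpq

theorem ENNReal.lintegral_rpow_le_lintegral_rpow_mul_measure_univ {X : Type*}
    [MeasurableSpace X] {μ : Measure X} {g : X → ℝ≥0∞} (hg : AEMeasurable g μ) {r : ℝ}
    (hr0 : 0 < r) (hr1 : r ≤ 1) :
    ∫⁻ x, g x ^ r ∂μ ≤ (∫⁻ x, g x ∂μ) ^ r * μ Set.univ ^ (1 - r) := by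
  have h := eLpNorm'_le_eLpNorm'_mul_rpow_measure_univ hr0 hr1 hg.aestronglyMeasurable
  simp only [eLpNorm'_eq_lintegral_enorm, enorm_eq_self, rpow_one, div_one] at h
  have h' := rpow_le_rpow h hr0.le
  rwa [← rpow_mul, one_div_mul_cancel hr0.ne', rpow_one,
    mul_rpow_of_nonneg _ _ hr0.le, ← rpow_mul (μ Set.univ),
    sub_mul, one_div_mul_cancel hr0.ne', one_mul] at h'

theorem lintegral_rpow_le_mul_lintegral_mul_rpow_of_mul_meas_le {X : Type*}
    [MeasurableSpace X] {μ : Measure X} {f g : X → ℝ≥0∞} {p : ℝ}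
    (hp : 1 < p) (hf : Measurable f) (hg : Measurable g) (hg_top : ∀ x, g x ≠ ∞)
    (hweak : ∀ t : ℝ≥0∞, 0 < t → t * μ {x | t ≤ g x} ≤ ∫⁻ x in {x | t ≤ g x}, f x ∂μ) :
    ∫⁻ x, g x ^ p ∂μ ≤ ENNReal.ofReal p.conjExponent * ∫⁻ x, f x * g x ^ (p - 1) ∂μ := by
  set G : X → ℝ := fun x => (g x).toReal
  have hG : Measurable G := hg.ennreal_toReal
  have hg_eq : ∀ r : ℝ, 0 ≤ r → ∀ x, g x ^ r = ENNReal.ofReal (G x ^ r) := fun r hr x => by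
    rw [← ofReal_rpow_of_nonneg toReal_nonneg hr, ofReal_toReal (hg_top x)]
  have hlevel : ∀ t : ℝ, {x | t ≤ G x} = {x | ENNReal.ofReal t ≤ g x} := fun t => by
    ext x; exact (ofReal_le_iff_le_toReal (hg_top x)).symm
  -- the layer cake formula, once for `μ` and once for `f μ`
  have hcake_μ : ∫⁻ x, g x ^ p ∂μ = ENNReal.ofReal p *
      ∫⁻ t in Set.Ioi 0, μ {x | t ≤ G x} * ENNReal.ofReal (t ^ (p - 1)) := by
    simp_rw [hg_eq p (by linarith)]
    exact lintegral_rpow_eq_lintegral_meas_le_mul μ (ae_of_all _ fun _ => toReal_nonneg)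
      hG.aemeasurable (by linarith)
  have hcake_fμ : ∫⁻ x, f x * g x ^ (p - 1) ∂μ = ENNReal.ofReal (p - 1) *
      ∫⁻ t in Set.Ioi 0, μ.withDensity f {x | t ≤ G x} * ENNReal.ofReal (t ^ (p - 1 - 1)) := by
    rw [← lintegral_rpow_eq_lintegral_meas_le_mul _ (ae_of_all _ fun _ => toReal_nonneg)
      hG.aemeasurable (by linarith), lintegral_withDensity_eq_lintegral_mul _ hf
      (hG.pow_const _).ennreal_ofReal]
    simp_rw [Pi.mul_apply, hg_eq (p - 1) (by linarith)]
  have hlevel_le : ∀ t ∈ Set.Ioi (0 : ℝ), μ {x | t ≤ G x} * ENNReal.ofReal (t ^ (p - 1)) ≤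
      μ.withDensity f {x | t ≤ G x} * ENNReal.ofReal (t ^ (p - 1 - 1)) := by
    intro t (ht : 0 < t)
    have hpow : t ^ (p - 1) = t * t ^ (p - 1 - 1) := by
      rw [← Real.rpow_one_add' ht.le (by linarith), add_sub_cancel]
    rw [withDensity_apply _ (measurableSet_le measurable_const hG), hlevel, hpow,
      ofReal_mul ht.le, ← mul_assoc, mul_comm (μ _)]
    gcongr
    exact hweak _ (ofReal_pos.2 ht)
  calc ∫⁻ x, g x ^ p ∂μ
      ≤ ENNReal.ofReal p * ∫⁻ t in Set.Ioi 0,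
          μ.withDensity f {x | t ≤ G x} * ENNReal.ofReal (t ^ (p - 1 - 1)) := by
        rw [hcake_μ]
        gcongr ENNReal.ofReal p * ?_
        exact setLIntegral_mono' measurableSet_Ioi hlevel_le
    _ = ENNReal.ofReal p.conjExponent * ∫⁻ x, f x * g x ^ (p - 1) ∂μ := by
        rw [hcake_fμ, ← mul_assoc,
          ← ofReal_mul (Real.HolderConjugate.conjExponent hp).symm.nonneg, Real.conjExponent,
          div_mul_cancel₀ _ (by linarith)]

theorem lintegral_mul_rpow_le_of_mul_meas_le {X : Type*} [MeasurableSpace X] {μ : Measure X}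
    {f g : X → ℝ≥0∞} {p : ℝ}
    (hp : 1 < p) (hf : Measurable f) (hg : Measurable g) (hg_top : ∀ x, g x ≠ ∞)
    (hweak : ∀ t : ℝ≥0∞, 0 < t → t * μ {x | t ≤ g x} ≤ ∫⁻ x in {x | t ≤ g x}, f x ∂μ)
    (hg_fin : ∫⁻ x, g x ^ p ∂μ ≠ ∞) :
    ∫⁻ x, f x * g x ^ (p - 1) ∂μ ≤
      ENNReal.ofReal p.conjExponent ^ (p - 1) * ∫⁻ x, f x ^ p ∂μ := by
  have hpq := Real.HolderConjugate.conjExponent hp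
  set c := ENNReal.ofReal p.conjExponent
  set Y := (∫⁻ x, f x ^ p ∂μ) ^ (1 / p)
  have hHolder : ∫⁻ x, f x * g x ^ (p - 1) ∂μ ≤ Y * (∫⁻ x, g x ^ p ∂μ) ^ (1 - p⁻¹) := by
    rw [hpq.one_sub_inv, ← one_div]
    exact ENNReal.lintegral_mul_rpow_le_lintegral_rpow_mul_lintegral_rpow hpq
      hf.aemeasurable hg.aemeasurable
  have hmaximal : ∫⁻ x, g x ^ p ∂μ ≤ (c * Y) ^ p := by
    refine le_rpow_of_le_mul_rpow_one_sub_inv (by linarith) hg_fin ?_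
    calc ∫⁻ x, g x ^ p ∂μ ≤ c * ∫⁻ x, f x * g x ^ (p - 1) ∂μ :=
          lintegral_rpow_le_mul_lintegral_mul_rpow_of_mul_meas_le hp hf hg hg_top hweak
      _ ≤ c * (Y * (∫⁻ x, g x ^ p ∂μ) ^ (1 - p⁻¹)) := by gcongr
      _ = c * Y * (∫⁻ x, g x ^ p ∂μ) ^ (1 - p⁻¹) := (mul_assoc _ _ _).symm
  calc ∫⁻ x, f x * g x ^ (p - 1) ∂μ
      ≤ Y * ((c * Y) ^ p) ^ (1 - p⁻¹) := hHolder.trans <| by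
        gcongr
        exact sub_nonneg.2 (inv_le_one_of_one_le₀ hp.le)
    _ = c ^ (p - 1) * Y ^ p := by
        rw [← rpow_mul, mul_one_sub, mul_inv_cancel₀ (by linarith),
          mul_rpow_of_nonneg _ _ (by linarith), mul_left_comm]
        have := ENNReal.rpow_add_of_nonneg (x := Y) 1 (p - 1) zero_le_one (by linarith)
        rw [rpow_one, add_sub_cancel] at this
        rw [this]
    _ = c ^ (p - 1) * ∫⁻ x, f x ^ p ∂μ := by
        rw [← rpow_mul, one_div_mul_cancel (by linarith), rpow_one]

namespace DyadicCube

variable {d : ℕ}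

theorem mem_toSet_iff {Q : DyadicCube d} {x : Fin d → ℝ} :
    x ∈ Q.toSet ↔ ∀ i, ⌊x i / 2 ^ Q.k⌋ = Q.j i := by
  have h2 : (0 : ℝ) < 2 ^ Q.k := by positivity
  simp only [toSet, Set.mem_ofPred_eq, Int.floor_eq_iff, le_div_iff₀ h2, div_lt_iff₀ h2,
    mul_comm]

theorem toSet_subset_of_k_le {Q R : DyadicCube d} (hk : Q.k ≤ R.k) {x : Fin d → ℝ}
    (hxQ : x ∈ Q.toSet) (hxR : x ∈ R.toSet) : Q.toSet ⊆ R.toSet := by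
  obtain ⟨n, hn⟩ := Int.eq_ofNat_of_zero_le (sub_nonneg.2 hk)
  -- the `R`-digit of a point is its `Q`-digit divided by `2 ^ n`
  have hfloor : ∀ z : ℝ, ⌊z / 2 ^ R.k⌋ = ⌊z / 2 ^ Q.k⌋ / (2 ^ n : ℕ) := fun z => by
    rw [← Int.floor_div_natCast, div_div, show R.k = Q.k + n by omega,
      zpow_add₀ two_ne_zero, zpow_natCast]
    push_cast; ring_nf
  intro y hyQ
  rw [mem_toSet_iff] at hxQ hxR hyQ ⊢
  intro i
  rw [← hxR i, hfloor, hfloor, hyQ i, hxQ i]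

theorem measurableSet_toSet (Q : DyadicCube d) : MeasurableSet Q.toSet := by
  have hpi : Q.toSet =
      Set.univ.pi fun i => Set.Ico (2 ^ Q.k * (Q.j i : ℝ)) (2 ^ Q.k * (Q.j i + 1)) := by
    ext x; simp [toSet]
  rw [hpi]
  exact MeasurableSet.univ_pi fun i => measurableSet_Ico

theorem measure_toSet_ne_top (μ : Measure (Fin d → ℝ)) [IsLocallyFiniteMeasure μ]
    (Q : DyadicCube d) : μ Q.toSet ≠ ∞ :=
  ne_top_of_le_ne_top (isCompact_Icc (a := fun i => 2 ^ Q.k * (Q.j i : ℝ))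
    (b := fun i => 2 ^ Q.k * (Q.j i + 1))).measure_lt_top.ne
    (measure_mono fun _ hx => ⟨fun i => (hx i).1, fun i => (hx i).2.le⟩)

theorem nonempty_toSet (Q : DyadicCube d) : Q.toSet.Nonempty :=
  ⟨fun i => 2 ^ Q.k * Q.j i,
    fun _ => ⟨le_rfl, mul_lt_mul_of_pos_left (lt_add_one _) (by positivity)⟩⟩

theorem mul_measure_biUnion_le_setLIntegral (μ : Measure (Fin d → ℝ))
    (f : (Fin d → ℝ) → ℝ≥0∞) (t : ℝ≥0∞) (G : Finset (DyadicCube d))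
    (hG : ∀ Q ∈ G, t * μ Q.toSet ≤ ∫⁻ x in Q.toSet, f x ∂μ) :
    t * μ (⋃ Q ∈ G, Q.toSet) ≤ ∫⁻ x in ⋃ Q ∈ G, Q.toSet, f x ∂μ := by
  classical
  induction G using Finset.strongInduction with
  | H G ih =>
  obtain rfl | hne := G.eq_empty_or_nonempty
  · simp
  -- a cube of maximal scale swallows every cube of `G` that it meets
  obtain ⟨Q₀, hQ₀, hmax⟩ := G.exists_max_image (fun Q => Q.k) hne
  set G' := G.filter fun Q => ¬ Q.toSet ⊆ Q₀.toSet
  have hdisj : Disjoint Q₀.toSet (⋃ Q ∈ G', Q.toSet) := by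
    refine Set.disjoint_iUnion₂_right.2 fun Q hQ => Set.disjoint_left.2 fun x hx₀ hx => ?_
    obtain ⟨hQG, hQ⟩ := Finset.mem_filter.1 hQ
    exact hQ (toSet_subset_of_k_le (hmax Q hQG) hx hx₀)
  have hunion : ⋃ Q ∈ G, Q.toSet = Q₀.toSet ∪ ⋃ Q ∈ G', Q.toSet := by
    refine subset_antisymm (Set.iUnion₂_subset fun Q hQ => ?_)
      (Set.union_subset (Set.subset_biUnion_of_mem hQ₀)
        (Set.biUnion_subset_biUnion_left (Finset.filter_subset _ G)))
    by_cases h : Q.toSet ⊆ Q₀.toSet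
    · exact h.trans Set.subset_union_left
    · exact (Set.subset_biUnion_of_mem (Finset.mem_filter.2 ⟨hQ, h⟩)).trans
        Set.subset_union_right
  have hmeas' : MeasurableSet (⋃ Q ∈ G', Q.toSet) :=
    G'.measurableSet_biUnion fun Q _ => Q.measurableSet_toSet
  have hG' : G' ⊂ G := Finset.filter_ssubset.2 ⟨Q₀, hQ₀, not_not.2 subset_rfl⟩
  rw [hunion, measure_union hdisj hmeas', lintegral_union hmeas' hdisj, mul_add]
  exact add_le_add (hG Q₀ hQ₀) (ih G' hG' fun Q hQ => hG Q (Finset.filter_subset _ G hQ))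

open scoped Classical

noncomputable def sumIndicator (F : Finset (DyadicCube d)) (a : DyadicCube d → ℝ≥0∞)
    (x : Fin d → ℝ) : ℝ≥0∞ :=
  ∑ Q ∈ F, Q.toSet.indicator (fun _ => a Q) x

-- For `μ Q = 0` the summand is `0 * ∞ ^ (p - 1) * 0 = 0`, matching the convention `0 / 0 = 0`.
noncomputable def energy (μ : Measure (Fin d → ℝ)) (p : ℝ) (F : Finset (DyadicCube d))
    (a : DyadicCube d → ℝ≥0∞) : ℝ≥0∞ :=
  ∑ Q ∈ F, a Q * μ Q.toSet *
    ((μ Q.toSet)⁻¹ * ∑ R ∈ F with R.toSet ⊆ Q.toSet, a R * μ R.toSet) ^ (p - 1)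

noncomputable def maximalFunction (μ : Measure (Fin d → ℝ)) (F : Finset (DyadicCube d))
    (f : (Fin d → ℝ) → ℝ≥0∞) (x : Fin d → ℝ) : ℝ≥0∞ :=
  F.sup fun Q => Q.toSet.indicator (fun _ => ⨍⁻ y in Q.toSet, f y ∂μ) x

variable {μ : Measure (Fin d → ℝ)} {F : Finset (DyadicCube d)} {a : DyadicCube d → ℝ≥0∞}

theorem sumIndicator_apply (x : Fin d → ℝ) :
    sumIndicator F a x = ∑ Q ∈ F with x ∈ Q.toSet, a Q := by
  rw [sumIndicator, Finset.sum_filter]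
  exact Finset.sum_congr rfl fun Q _ => Set.indicator_apply _ _ _

theorem measurable_sumIndicator : Measurable (sumIndicator F a) :=
  Finset.measurable_sum _ fun Q _ => measurable_const.indicator Q.measurableSet_toSet

theorem lintegral_sumIndicator (μ : Measure (Fin d → ℝ)) (F : Finset (DyadicCube d))
    (a : DyadicCube d → ℝ≥0∞) : ∫⁻ x, sumIndicator F a x ∂μ = ∑ Q ∈ F, a Q * μ Q.toSet := by
  simp only [sumIndicator]
  rw [lintegral_finsetSum _ fun Q _ =>
    measurable_const.indicator Q.measurableSet_toSet]
  exact Finset.sum_congr rfl fun Q _ => lintegral_indicator_const Q.measurableSet_toSet _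

theorem sum_subset_mul_measure_le_setLIntegral (μ : Measure (Fin d → ℝ)) (Q : DyadicCube d) :
    ∑ R ∈ F with R.toSet ⊆ Q.toSet, a R * μ R.toSet ≤
      ∫⁻ x in Q.toSet, sumIndicator F a x ∂μ := by
  calc ∑ R ∈ F with R.toSet ⊆ Q.toSet, a R * μ R.toSet
      = ∫⁻ x in Q.toSet, sumIndicator {R ∈ F | R.toSet ⊆ Q.toSet} a x ∂μ := by
        rw [lintegral_sumIndicator]
        refine Finset.sum_congr rfl fun R hR => ?_
        rw [Measure.restrict_apply R.measurableSet_toSet,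
          Set.inter_eq_left.2 (Finset.mem_filter.1 hR).2]
    _ ≤ ∫⁻ x in Q.toSet, sumIndicator F a x ∂μ :=
        lintegral_mono fun x => Finset.sum_le_sum_of_subset (Finset.filter_subset _ F)

theorem laverage_le_maximalFunction (f : (Fin d → ℝ) → ℝ≥0∞) {Q : DyadicCube d} (hQ : Q ∈ F)
    {x : Fin d → ℝ} (hx : x ∈ Q.toSet) :
    ⨍⁻ y in Q.toSet, f y ∂μ ≤ maximalFunction μ F f x := by
  simpa only [maximalFunction, Set.indicator_of_mem hx] using
    Finset.le_sup (f := fun Q => Q.toSet.indicator (fun _ => ⨍⁻ y in Q.toSet, f y ∂μ) x) hQ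

theorem measurable_maximalFunction (f : (Fin d → ℝ) → ℝ≥0∞) :
    Measurable (maximalFunction μ F f) := by
  obtain rfl | hF := F.eq_empty_or_nonempty
  · exact measurable_const
  convert Finset.measurable_sup' hF fun Q _ =>
    measurable_const.indicator (f := fun _ => ⨍⁻ y in Q.toSet, f y ∂μ) Q.measurableSet_toSet
    using 1
  ext x
  rw [Finset.sup'_apply, Finset.sup'_eq_sup, maximalFunction]

theorem setOf_le_maximalFunction (f : (Fin d → ℝ) → ℝ≥0∞) {t : ℝ≥0∞} (ht : 0 < t) :
    {x | t ≤ maximalFunction μ F f x} =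
      ⋃ Q ∈ F.filter (fun Q => t ≤ ⨍⁻ y in Q.toSet, f y ∂μ), Q.toSet := by
  ext x
  simp only [maximalFunction, Set.mem_ofPred_eq, Finset.le_sup_iff ht, Set.mem_iUnion,
    Finset.mem_filter, exists_prop]
  refine exists_congr fun Q => ?_
  by_cases hx : x ∈ Q.toSet <;> simp [hx, ht.ne', and_comm]

theorem mul_measure_le_maximalFunction_le [IsLocallyFiniteMeasure μ]
    (f : (Fin d → ℝ) → ℝ≥0∞) {t : ℝ≥0∞} (ht : 0 < t) :
    t * μ {x | t ≤ maximalFunction μ F f x} ≤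
      ∫⁻ x in {x | t ≤ maximalFunction μ F f x}, f x ∂μ := by
  rw [setOf_le_maximalFunction f ht]
  refine mul_measure_biUnion_le_setLIntegral μ f t _ fun Q hQ => ?_
  calc t * μ Q.toSet ≤ (⨍⁻ y in Q.toSet, f y ∂μ) * μ Q.toSet :=
        mul_le_mul_left (Finset.mem_filter.1 hQ).2 _
    _ = ∫⁻ y in Q.toSet, f y ∂μ := by
        rw [setLAverage_eq, ENNReal.div_mul_cancel'
          (fun h => by simp [Measure.restrict_eq_zero.2 h])
          (fun h => absurd h (Q.measure_toSet_ne_top μ))]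

theorem energy_le_lintegral_mul_maximalFunction (μ : Measure (Fin d → ℝ)) {p : ℝ} (hp : 1 ≤ p)
    (F : Finset (DyadicCube d)) (a : DyadicCube d → ℝ≥0∞) :
    energy μ p F a ≤
      ∫⁻ x, sumIndicator F a x * maximalFunction μ F (sumIndicator F a) x ^ (p - 1) ∂μ := by
  set M := maximalFunction μ F (sumIndicator F a)
  have hM : Measurable M := measurable_maximalFunction _
  calc energy μ p F a
      ≤ ∑ Q ∈ F, ∫⁻ x, Q.toSet.indicator (fun x => a Q * M x ^ (p - 1)) x ∂μ := by
        refine Finset.sum_le_sum fun Q hQ => ?_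
        rw [lintegral_indicator Q.measurableSet_toSet, mul_right_comm, ← setLIntegral_const]
        refine setLIntegral_mono' Q.measurableSet_toSet fun x hx => ?_
        gcongr
        calc (μ Q.toSet)⁻¹ * ∑ R ∈ F with R.toSet ⊆ Q.toSet, a R * μ R.toSet
            ≤ (μ Q.toSet)⁻¹ * ∫⁻ y in Q.toSet, sumIndicator F a y ∂μ := by
              gcongr; exact sum_subset_mul_measure_le_setLIntegral μ Q
          _ = ⨍⁻ y in Q.toSet, sumIndicator F a y ∂μ := by
              rw [setLAverage_eq, ENNReal.div_eq_inv_mul]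
          _ ≤ M x := laverage_le_maximalFunction _ hQ hx
    _ = ∫⁻ x, sumIndicator F a x * M x ^ (p - 1) ∂μ := by
        rw [← lintegral_finsetSum _ fun Q _ =>
          ((hM.pow_const _).const_mul _).indicator Q.measurableSet_toSet]
        refine lintegral_congr fun x => ?_
        simp only [sumIndicator, Finset.sum_mul, Set.indicator_mul_left]

theorem laverage_sumIndicator_ne_top [IsLocallyFiniteMeasure μ] (ha : ∀ Q, a Q ≠ ∞)
    (Q : DyadicCube d) : ⨍⁻ y in Q.toSet, sumIndicator F a y ∂μ ≠ ∞ := by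
  refine (laverage_lt_top (ne_top_of_le_ne_top ?_ (setLIntegral_le_lintegral _ _))).ne
  rw [lintegral_sumIndicator]
  exact sum_ne_top.2 fun R _ => mul_ne_top (ha R) (R.measure_toSet_ne_top μ)

theorem maximalFunction_ne_top (f : (Fin d → ℝ) → ℝ≥0∞)
    (hf : ∀ Q : DyadicCube d, ⨍⁻ y in Q.toSet, f y ∂μ ≠ ∞) (x : Fin d → ℝ) :
    maximalFunction μ F f x ≠ ∞ :=
  ((Finset.sup_lt_iff (WithTop.coe_lt_top _)).2 fun Q _ =>
    (Set.indicator_le_self _ _ x).trans_lt (hf Q).lt_top).ne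

theorem lintegral_maximalFunction_rpow_ne_top [IsLocallyFiniteMeasure μ]
    (f : (Fin d → ℝ) → ℝ≥0∞) (hf : ∀ Q : DyadicCube d, ⨍⁻ y in Q.toSet, f y ∂μ ≠ ∞) {p : ℝ}
    (hp : 0 < p) :
    ∫⁻ x, maximalFunction μ F f x ^ p ∂μ ≠ ∞ := by
  have hsup : ∀ s t : ℝ≥0∞, (s ⊔ t) ^ p ≤ s ^ p + t ^ p := fun s t => by
    rcases le_total s t with h | h
    · rw [sup_eq_right.2 h]; exact le_add_self
    · rw [sup_eq_left.2 h]; exact le_self_add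
  have hpt : ∀ x, maximalFunction μ F f x ^ p ≤
      sumIndicator F (fun Q => (⨍⁻ y in Q.toSet, f y ∂μ) ^ p) x := fun x => by
    refine (Finset.apply_sup_le_sum (f := (· ^ p)) (zero_rpow_of_pos hp) (hsup _ _) F).trans_eq
      (Finset.sum_congr rfl fun Q _ => ?_)
    by_cases hx : x ∈ Q.toSet <;> simp [hx, zero_rpow_of_pos hp]
  refine ne_top_of_le_ne_top ?_ (lintegral_mono hpt)
  rw [lintegral_sumIndicator]
  exact sum_ne_top.2 fun Q _ =>
    mul_ne_top (rpow_ne_top_of_nonneg hp.le (hf Q)) (Q.measure_toSet_ne_top μ)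

theorem energy_le_lintegral_rpow [IsLocallyFiniteMeasure μ] {p : ℝ} (hp : 1 < p)
    (ha : ∀ Q, a Q ≠ ∞) :
    energy μ p F a ≤
      ENNReal.ofReal p.conjExponent ^ (p - 1) * ∫⁻ x, sumIndicator F a x ^ p ∂μ :=
  (energy_le_lintegral_mul_maximalFunction μ hp.le F a).trans <|
    lintegral_mul_rpow_le_of_mul_meas_le hp measurable_sumIndicator
      (measurable_maximalFunction (sumIndicator F a))
      (maximalFunction_ne_top (sumIndicator F a) (laverage_sumIndicator_ne_top ha))
      (fun _ ht => mul_measure_le_maximalFunction_le (sumIndicator F a) ht)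
      (lintegral_maximalFunction_rpow_ne_top (sumIndicator F a)
        (laverage_sumIndicator_ne_top ha) (by linarith))

theorem rpow_sumIndicator_le_sum_indicator_below {p : ℝ} (hp : 1 ≤ p) (ha : ∀ Q, a Q ≠ ∞)
    (x : Fin d → ℝ) :
    sumIndicator F a x ^ p ≤ ENNReal.ofReal p * ∑ Q ∈ F, Q.toSet.indicator
      (fun y => a Q * sumIndicator {R ∈ F | R.toSet ⊆ Q.toSet} a y ^ (p - 1)) x := by
  rw [sumIndicator_apply]
  refine (rpow_sum_le_ofReal_mul_sum_mul_rpow_sum_filter_le (fun Q => Q.k) hp a _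
    fun Q _ => ha Q).trans ?_
  rw [Finset.sum_filter]
  gcongr ENNReal.ofReal p * ?_
  refine Finset.sum_le_sum fun Q _ => ?_
  split_ifs with hxQ
  · rw [Set.indicator_of_mem hxQ, sumIndicator_apply, Finset.filter_filter]
    gcongr a Q * ?_ ^ _
    refine Finset.sum_le_sum_of_subset fun R hR => ?_
    simp only [Finset.mem_filter] at hR ⊢
    exact ⟨⟨hR.1, toSet_subset_of_k_le hR.2.2 hR.2.1 hxQ⟩, hR.2.1⟩
  · exact zero_le

theorem lintegral_rpow_sumIndicator_le_of_le_two [IsLocallyFiniteMeasure μ] {p : ℝ}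
    (hp1 : 1 < p) (hp2 : p ≤ 2) (ha : ∀ Q, a Q ≠ ∞) :
    ∫⁻ x, sumIndicator F a x ^ p ∂μ ≤ ENNReal.ofReal p * energy μ p F a := by
  set g := fun Q : DyadicCube d => sumIndicator {R ∈ F | R.toSet ⊆ Q.toSet} a
  have hg : ∀ Q, Measurable fun y => g Q y ^ (p - 1) := fun Q =>
    measurable_sumIndicator.pow_const _
  calc ∫⁻ x, sumIndicator F a x ^ p ∂μ
      ≤ ∫⁻ x, ENNReal.ofReal p *
          ∑ Q ∈ F, Q.toSet.indicator (fun y => a Q * g Q y ^ (p - 1)) x ∂μ :=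
        lintegral_mono (rpow_sumIndicator_le_sum_indicator_below hp1.le ha)
    _ = ENNReal.ofReal p * ∑ Q ∈ F, a Q * ∫⁻ y in Q.toSet, g Q y ^ (p - 1) ∂μ := by
        rw [lintegral_const_mul _ (Finset.measurable_sum _ fun Q _ =>
            ((hg Q).const_mul _).indicator Q.measurableSet_toSet),
          lintegral_finsetSum _ fun Q _ => ((hg Q).const_mul _).indicator Q.measurableSet_toSet]
        congr 1
        exact Finset.sum_congr rfl fun Q _ => by
          rw [lintegral_indicator Q.measurableSet_toSet, lintegral_const_mul _ (hg Q)]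
    _ ≤ ENNReal.ofReal p * energy μ p F a := by
        gcongr ENNReal.ofReal p * ?_
        refine Finset.sum_le_sum fun Q _ => ?_
        rw [mul_assoc]
        gcongr a Q * ?_
        obtain hQ0 | hQ0 := eq_or_ne (μ Q.toSet) 0
        · simp [Measure.restrict_eq_zero.2 hQ0]
        have hQtop := Q.measure_toSet_ne_top μ
        -- Jensen's inequality for the concave power `p - 1 ≤ 1`
        have hJensen := ENNReal.lintegral_rpow_le_lintegral_rpow_mul_measure_univ
          (μ := μ.restrict Q.toSet) (measurable_sumIndicator (F := {R ∈ F | R.toSet ⊆ Q.toSet})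
            (a := a)).aemeasurable (r := p - 1) (by linarith) (by linarith)
        rw [Measure.restrict_apply_univ] at hJensen
        refine hJensen.trans ?_
        calc (∫⁻ y in Q.toSet, g Q y ∂μ) ^ (p - 1) * μ Q.toSet ^ (1 - (p - 1))
            ≤ (∑ R ∈ F with R.toSet ⊆ Q.toSet, a R * μ R.toSet) ^ (p - 1) *
                μ Q.toSet ^ (1 - (p - 1)) := by
              gcongr
              exact (setLIntegral_le_lintegral _ _).trans_eq (lintegral_sumIndicator μ _ a)
          _ = μ Q.toSet * ((μ Q.toSet)⁻¹ *
                ∑ R ∈ F with R.toSet ⊆ Q.toSet, a R * μ R.toSet) ^ (p - 1) := by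
              rw [mul_rpow_of_nonneg _ _ (by linarith), inv_rpow, rpow_sub _ _ hQ0 hQtop,
                rpow_one, ENNReal.div_eq_inv_mul]
              ring

theorem rpow_sumIndicator_le_sumIndicator_above {p : ℝ} (hp : 1 ≤ p) (ha : ∀ Q, a Q ≠ ∞)
    (x : Fin d → ℝ) :
    sumIndicator F a x ^ p ≤ ENNReal.ofReal p *
      sumIndicator F (fun Q => a Q * (∑ R ∈ F with Q.toSet ⊆ R.toSet, a R) ^ (p - 1)) x := by
  rw [sumIndicator_apply, sumIndicator_apply]
  refine (rpow_sum_le_ofReal_mul_sum_mul_rpow_sum_filter_le (fun Q => OrderDual.toDual Q.k) hp a _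
    fun Q _ => ha Q).trans ?_
  refine mul_le_mul_right (Finset.sum_le_sum fun Q hQ => mul_le_mul_right
    (rpow_le_rpow (Finset.sum_le_sum_of_subset fun R hR => ?_) (by linarith)) _) _
  simp only [Finset.mem_filter, OrderDual.toDual_le_toDual] at hQ hR ⊢
  exact ⟨hR.1.1, toSet_subset_of_k_le hR.2 hQ.2 hR.1.2⟩

theorem rpow_sum_above_le {q : ℝ} (hq : 1 ≤ q) (ha : ∀ Q, a Q ≠ ∞) (Q : DyadicCube d) :
    (∑ R ∈ F with Q.toSet ⊆ R.toSet, a R) ^ q ≤ ENNReal.ofReal q *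
      ∑ R ∈ F with Q.toSet ⊆ R.toSet,
        a R * (∑ R' ∈ F with R.toSet ⊆ R'.toSet, a R') ^ (q - 1) := by
  obtain ⟨x, hx⟩ := Q.nonempty_toSet
  refine (rpow_sum_le_ofReal_mul_sum_mul_rpow_sum_filter_le (fun Q => OrderDual.toDual Q.k) hq a _
    fun Q _ => ha Q).trans ?_
  refine mul_le_mul_right (Finset.sum_le_sum fun R hR => mul_le_mul_right
    (rpow_le_rpow (Finset.sum_le_sum_of_subset fun R' hR' => ?_) (by linarith)) _) _
  simp only [Finset.mem_filter, OrderDual.toDual_le_toDual] at hR hR' ⊢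
  exact ⟨hR'.1.1, toSet_subset_of_k_le hR'.2 (hR.2 hx) (hR'.1.2 hx)⟩

theorem mul_sum_subset_eq_mul_measure_mul_average (μ : Measure (Fin d → ℝ))
    [IsLocallyFiniteMeasure μ] (F : Finset (DyadicCube d)) (a : DyadicCube d → ℝ≥0∞)
    (R : DyadicCube d) (c : ℝ≥0∞) :
    c * ∑ Q ∈ F with Q.toSet ⊆ R.toSet, a Q * μ Q.toSet =
      c * μ R.toSet * ((μ R.toSet)⁻¹ * ∑ Q ∈ F with Q.toSet ⊆ R.toSet, a Q * μ Q.toSet) := by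
  obtain hR0 | hR0 := eq_or_ne (μ R.toSet) 0
  · rw [Finset.sum_eq_zero fun Q hQ => by
      rw [measure_mono_null (Finset.mem_filter.1 hQ).2 hR0, mul_zero]]
    simp
  · rw [mul_assoc c, ← mul_assoc (μ R.toSet), ENNReal.mul_inv_cancel hR0
      (R.measure_toSet_ne_top μ), one_mul]

theorem sum_above_le_energy [IsLocallyFiniteMeasure μ] {p : ℝ} (hp : 2 < p)
    (ha : ∀ Q, a Q ≠ ∞) :
    ∑ Q ∈ F, a Q * μ Q.toSet * (∑ R ∈ F with Q.toSet ⊆ R.toSet, a R) ^ (p - 1) ≤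
      ENNReal.ofReal (p - 1) ^ (p - 1) * energy μ p F a := by
  set t := fun Q : DyadicCube d => ∑ R ∈ F with Q.toSet ⊆ R.toSet, a R
  set w := fun Q : DyadicCube d => a Q * μ Q.toSet
  set avg := fun Q : DyadicCube d =>
    (μ Q.toSet)⁻¹ * ∑ R ∈ F with R.toSet ⊆ Q.toSet, a R * μ R.toSet
  set D := ∑ Q ∈ F, w Q * t Q ^ (p - 1)
  have hpq := Real.HolderConjugate.conjExponent (show 1 < p - 1 by linarith)
  have hD : D ≠ ∞ := sum_ne_top.2 fun Q _ => mul_ne_top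
    (mul_ne_top (ha Q) (Q.measure_toSet_ne_top μ))
    (rpow_ne_top_of_nonneg (by linarith) (sum_ne_top.2 fun R _ => ha R))
  have ht_pow : ∀ Q, (t Q ^ (p - 1 - 1)) ^ (p - 1).conjExponent = t Q ^ (p - 1) := fun Q => by
    rw [← rpow_mul, Real.conjExponent, mul_div_cancel₀ _ (by linarith : p - 1 - 1 ≠ 0)]
  have hD_le :
      D ≤ ENNReal.ofReal (p - 1) * energy μ p F a ^ (p - 1)⁻¹ * D ^ (1 - (p - 1)⁻¹) :=
  calc D ≤ ∑ Q ∈ F, w Q * (ENNReal.ofReal (p - 1) *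
        ∑ R ∈ F with Q.toSet ⊆ R.toSet, a R * t R ^ (p - 1 - 1)) :=
        Finset.sum_le_sum fun Q _ => mul_le_mul_right (rpow_sum_above_le (by linarith) ha Q) _
    _ = ENNReal.ofReal (p - 1) * ∑ R ∈ F, a R * t R ^ (p - 1 - 1) *
          ∑ Q ∈ F with Q.toSet ⊆ R.toSet, w Q := by
        simp_rw [Finset.mul_sum, Finset.sum_filter]
        rw [Finset.sum_comm]
        refine Finset.sum_congr rfl fun R _ => Finset.sum_congr rfl fun Q _ => ?_
        split_ifs <;> ring
    _ = ENNReal.ofReal (p - 1) * ∑ R ∈ F, w R * avg R * t R ^ (p - 1 - 1) := by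
        congr 1
        refine Finset.sum_congr rfl fun R _ => ?_
        rw [mul_right_comm, mul_sum_subset_eq_mul_measure_mul_average μ F a R]
    _ ≤ ENNReal.ofReal (p - 1) * ((∑ R ∈ F, w R * avg R ^ (p - 1)) ^ (1 / (p - 1)) *
          (∑ R ∈ F, w R * (t R ^ (p - 1 - 1)) ^ (p - 1).conjExponent) ^
            (1 / (p - 1).conjExponent)) := by
        gcongr
        exact inner_le_weight_mul_Lp_mul_Lq F w avg _ hpq
    _ = ENNReal.ofReal (p - 1) * energy μ p F a ^ (p - 1)⁻¹ * D ^ (1 - (p - 1)⁻¹) := by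
        simp_rw [ht_pow, one_div, hpq.one_sub_inv, mul_assoc]
        rfl
  calc D ≤ (ENNReal.ofReal (p - 1) * energy μ p F a ^ (p - 1)⁻¹) ^ (p - 1) :=
        le_rpow_of_le_mul_rpow_one_sub_inv (by linarith) hD hD_le
    _ = ENNReal.ofReal (p - 1) ^ (p - 1) * energy μ p F a := by
        rw [mul_rpow_of_nonneg _ _ (by linarith), ← rpow_mul, inv_mul_cancel₀ (by linarith),
          rpow_one]

theorem lintegral_rpow_sumIndicator_le_of_two_lt [IsLocallyFiniteMeasure μ] {p : ℝ}
    (hp : 2 < p) (ha : ∀ Q, a Q ≠ ∞) :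
    ∫⁻ x, sumIndicator F a x ^ p ∂μ ≤
      ENNReal.ofReal p * ENNReal.ofReal (p - 1) ^ (p - 1) * energy μ p F a := by
  set t := fun Q : DyadicCube d => ∑ R ∈ F with Q.toSet ⊆ R.toSet, a R
  calc ∫⁻ x, sumIndicator F a x ^ p ∂μ
      ≤ ∫⁻ x, ENNReal.ofReal p * sumIndicator F (fun Q => a Q * t Q ^ (p - 1)) x ∂μ :=
        lintegral_mono (rpow_sumIndicator_le_sumIndicator_above (by linarith) ha)
    _ = ENNReal.ofReal p * ∑ Q ∈ F, a Q * μ Q.toSet * t Q ^ (p - 1) := by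
        rw [lintegral_const_mul _ measurable_sumIndicator, lintegral_sumIndicator]
        simp_rw [mul_right_comm]
    _ ≤ ENNReal.ofReal p * ENNReal.ofReal (p - 1) ^ (p - 1) * energy μ p F a := by
        rw [mul_assoc]
        exact mul_le_mul_right (sum_above_le_energy hp ha) _

theorem lintegral_rpow_sumIndicator_le [IsLocallyFiniteMeasure μ] {p : ℝ} (hp : 1 < p)
    (ha : ∀ Q, a Q ≠ ∞) :
    ∫⁻ x, sumIndicator F a x ^ p ∂μ ≤
      ENNReal.ofReal p * max 1 (ENNReal.ofReal (p - 1) ^ (p - 1)) * energy μ p F a := by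
  rcases le_or_gt p 2 with hp2 | hp2
  · refine (lintegral_rpow_sumIndicator_le_of_le_two hp hp2 ha).trans ?_
    gcongr
    exact le_mul_of_one_le_right' (le_max_left _ _)
  · refine (lintegral_rpow_sumIndicator_le_of_two_lt hp2 ha).trans ?_
    gcongr
    exact le_max_right _ _

theorem tsum_indicator_eq_sumIndicator (hF : ∀ Q ∉ F, a Q = 0) (x : Fin d → ℝ) :
    ∑' Q : DyadicCube d, Q.toSet.indicator (fun _ => a Q) x = sumIndicator F a x :=
  tsum_eq_sum fun Q hQ => by simp [hF Q hQ]

theorem tsum_eq_energy (μ : Measure (Fin d → ℝ)) (p : ℝ) (hF : ∀ Q ∉ F, a Q = 0) :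
    ∑' Q : DyadicCube d, a Q * μ Q.toSet *
        ((μ Q.toSet)⁻¹ * ∑' R : {R : DyadicCube d // R.toSet ⊆ Q.toSet}, a R.1 * μ R.1.toSet) ^
          (p - 1) = energy μ p F a := by
  rw [tsum_eq_sum fun Q hQ => by simp [hF Q hQ]]
  refine Finset.sum_congr rfl fun Q _ => ?_
  have hsubtype : ∑' R : {R : DyadicCube d // R.toSet ⊆ Q.toSet}, a R.1 * μ R.1.toSet =
      ∑' R, {R : DyadicCube d | R.toSet ⊆ Q.toSet}.indicator (fun R => a R * μ R.toSet) R :=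
    tsum_subtype {R : DyadicCube d | R.toSet ⊆ Q.toSet} fun R => a R * μ R.toSet
  rw [hsubtype, tsum_eq_sum (s := F) fun R hR => by simp [hF R hR], Finset.sum_filter]
  rfl

end DyadicCube

/-- `∫ (∑_Q a_Q 1_Q)^p dμ ≍_p ∑_Q a_Q μ(Q) ((1/μ(Q)) ∑_{R ⊆ Q} a_R μ(R))^(p-1)`. -/
theorem stmt2 (p : ℝ) (hp : 1 < p) :
    ∃ c C : ℝ≥0∞, 0 < c ∧ C < ∞ ∧
      ∀ (d : ℕ) (μ : Measure (Fin d → ℝ)), IsLocallyFiniteMeasure μ →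
        ∀ (a : DyadicCube d → ℝ≥0), (Function.support a).Finite →
          (c * ∑' Q : DyadicCube d,
              (a Q : ℝ≥0∞) * μ Q.toSet *
                ((μ Q.toSet)⁻¹ * ∑' R : {R : DyadicCube d // R.toSet ⊆ Q.toSet},
                    (a R.1 : ℝ≥0∞) * μ R.1.toSet) ^ (p - 1)
            ≤ ∫⁻ x, (∑' Q : DyadicCube d,
                Q.toSet.indicator (fun _ => (a Q : ℝ≥0∞)) x) ^ p ∂μ) ∧
          (∫⁻ x, (∑' Q : DyadicCube d,
                Q.toSet.indicator (fun _ => (a Q : ℝ≥0∞)) x) ^ p ∂μ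
            ≤ C * ∑' Q : DyadicCube d,
              (a Q : ℝ≥0∞) * μ Q.toSet *
                ((μ Q.toSet)⁻¹ * ∑' R : {R : DyadicCube d // R.toSet ⊆ Q.toSet},
                    (a R.1 : ℝ≥0∞) * μ R.1.toSet) ^ (p - 1)) := by
  refine ⟨(ENNReal.ofReal p.conjExponent ^ (p - 1))⁻¹,
    ENNReal.ofReal p * max 1 (ENNReal.ofReal (p - 1) ^ (p - 1)), ?_, ?_, ?_⟩
  · exact ENNReal.inv_pos.2 (rpow_ne_top_of_nonneg (by linarith) ofReal_ne_top)
  · exact mul_lt_top ofReal_lt_top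
      (max_lt one_lt_top (rpow_lt_top_of_nonneg (by linarith) ofReal_ne_top))
  intro d μ hμ a ha
  have hF : ∀ Q ∉ ha.toFinset, (a Q : ℝ≥0∞) = 0 := fun Q hQ => by
    simpa using ha.mem_toFinset.not.1 hQ
  have hfinite : ∀ Q, (a Q : ℝ≥0∞) ≠ ∞ := fun Q => coe_ne_top
  simp_rw [DyadicCube.tsum_indicator_eq_sumIndicator hF, DyadicCube.tsum_eq_energy μ p hF]
  refine ⟨?_, DyadicCube.lintegral_rpow_sumIndicator_le hp hfinite⟩
  rw [ENNReal.inv_mul_le_iff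
    (rpow_pos (ofReal_pos.2 (Real.HolderConjugate.conjExponent hp).symm.pos) ofReal_ne_top).ne'
    (rpow_ne_top_of_nonneg (by linarith) ofReal_ne_top)]
  exact DyadicCube.energy_le_lintegral_rpow hp hfinite
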